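/- Let E be a real inner product space, let x, y ∈ E and s, t ∈ ℝ with ‖x‖ < s and ‖y‖ < t. Then equality s·t − ⟪x, y⟫ = √(s² − ‖x‖²) · √(t² − ‖y‖²) holds if and only if t • x = s • y, i.e. if and only if the vectors (s, x) and (t, y) lie on the same ray in ℝ × E. -/
import Mathlib


open scoped RealInnerProductSpace

/-- Equality case of the reverse Cauchy–Schwarz inequality for the Minkowski pairing:
for `‖x‖ < s` and `‖y‖ < t`, equality `s·t − ⟪x, y⟫ = √(s² − ‖x‖²) · √(t² − ‖y‖²)`
holds if and only if `t • x = s • y`, i.e. iff `(s, x)` and `(t, y)` lie on a common ray. -/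
theorem minkowski_reverse_cauchySchwarz_eq_iff {E : Type*} [NormedAddCommGroup E]
    [InnerProductSpace ℝ E] (x y : E) (s t : ℝ) (hx : ‖x‖ < s) (hy : ‖y‖ < t) :
    s * t - ⟪x, y⟫ = Real.sqrt (s ^ 2 - ‖x‖ ^ 2) * Real.sqrt (t ^ 2 - ‖y‖ ^ 2)
      ↔ t • x = s • y := by
  have hxn : (0:ℝ) ≤ ‖x‖ := norm_nonneg x
  have hyn : (0:ℝ) ≤ ‖y‖ := norm_nonneg y
  have hs : 0 < s := lt_of_le_of_lt hxn hx
  have ht : 0 < t := lt_of_le_of_lt hyn hy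
  have hA : 0 < s ^ 2 - ‖x‖ ^ 2 := by nlinarith
  have hB : 0 < t ^ 2 - ‖y‖ ^ 2 := by nlinarith
  have hcs : ⟪x, y⟫ ≤ ‖x‖ * ‖y‖ := real_inner_le_norm x y
  have hpos : 0 < s * t - ⟪x, y⟫ := by nlinarith
  constructor
  · intro h
    have hsq : (s * t - ⟪x, y⟫) ^ 2 = (s ^ 2 - ‖x‖ ^ 2) * (t ^ 2 - ‖y‖ ^ 2) := by
      rw [h, mul_pow, Real.sq_sqrt hA.le, Real.sq_sqrt hB.le]
    have key : (s * t - ⟪x, y⟫) ^ 2 ≤ (s * t - ‖x‖ * ‖y‖) ^ 2 := by nlinarith [sq_nonneg (s * ‖y‖ - t * ‖x‖)]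
    have huv : 0 < s * t - ‖x‖ * ‖y‖ := by nlinarith
    have hp : ⟪x, y⟫ = ‖x‖ * ‖y‖ := by nlinarith
    have hst : s * ‖y‖ = t * ‖x‖ := by nlinarith [sq_nonneg (s * ‖y‖ - t * ‖x‖)]
    have heq : ‖y‖ • x = ‖x‖ • y := (inner_eq_norm_mul_iff_real).mp hp
    rcases eq_or_ne ‖x‖ 0 with h0 | h0
    · have hx0 : x = 0 := norm_eq_zero.mp h0
      have hy0 : y = 0 := by
        have : ‖y‖ = 0 := by
          have := hst; rw [h0, mul_zero] at this
          exact (mul_eq_zero.mp this).resolve_left hs.ne'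
        exact norm_eq_zero.mp this
      simp [hx0, hy0]
    · have : ‖x‖ • (t • x) = ‖x‖ • (s • y) := by
        rw [smul_smul, smul_smul, mul_comm ‖x‖ t, ← hst, mul_comm s ‖y‖, mul_smul, mul_smul,
          smul_comm ‖y‖ s x, smul_comm ‖x‖ s y, heq]
      exact smul_right_injective E h0 this
  · intro h
    have hyv : y = (t / s) • x := by
      have : (s⁻¹ * t) • x = (s⁻¹ * s) • y := by rw [mul_smul, mul_smul, h]
      rw [inv_mul_cancel₀ hs.ne', one_smul] at this
      rw [← this, div_eq_inv_mul]
    have hts : 0 ≤ t / s := div_nonneg ht.le hs.le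
    have hny : ‖y‖ = (t / s) * ‖x‖ := by
      rw [hyv, norm_smul, Real.norm_eq_abs, abs_of_nonneg hts]
    have hip : ⟪x, y⟫ = (t / s) * ‖x‖ ^ 2 := by
      rw [hyv, real_inner_smul_right, real_inner_self_eq_norm_sq]
    have hAB : (s ^ 2 - ‖x‖ ^ 2) * (t ^ 2 - ‖y‖ ^ 2) = (s * t - ⟪x, y⟫) ^ 2 := by
      rw [hny, hip]
      field_simp
    rw [← Real.sqrt_mul hA.le, hAB, Real.sqrt_sq hpos.le]
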